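/- Let φ ∈ ℝ with |φ| < 1, let c > 0, and let f(λ) = (1/2π)/|1 − φe^{iλ}|² be the spectral density of the causal AR(1) process z_t = φ z_{t−1} + ε_t. Then for any s ∈ ℂ with Im s > 0, the equation z = −1/s + (1/2π)∫_0^{2π}[c·s + (2πf(λ))^{-1}]^{-1} dλ is equivalent to z = −1/s + 1/√((cs + 1 + φ²)² − 4φ²), where √· is the complex square root with nonnegative imaginary part. In particular, when φ = 0 this reduces to z = −1/s + 1/(cs + 1), the equation characterising the standard Marčenko-Pastur law of index c. -/

import Mathlib

open MeasureTheory Complex Real Filter Topology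

/-- The complex square root with nonnegative imaginary part. -/
noncomputable def sqrtIm (z : ℂ) : ℂ :=
  if 0 ≤ (z ^ (1 / 2 : ℂ)).im then z ^ (1 / 2 : ℂ) else -(z ^ (1 / 2 : ℂ))

/-!
Since `1 / (2π f(λ)) = |1 - φ e^{iλ}|² = 1 + φ² - 2φ cos λ`, the integral is
`∫₀^{2π} dt / (a - 2φ cos t)` with `a = cs + 1 + φ²` in the upper half-plane. For `φ ≠ 0`,
substituting `e = e^{it}` gives `a - 2φ cos t = -φ (e - p)(e - q) / e`, where `pq = 1`,
`φ(p + q) = a`; as `Im a > 0` neither root lies on the unit circle, so `|p| < 1 < |q|`.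
Partial fractions and Cauchy's formula on the unit circle give `2π / (φ(q - p))`, and
`φ(q - p)` is a square root of `a² - 4φ²`. The branch is fixed by the sign of the imaginary part:
the integrand has negative imaginary part everywhere, so `Im (φ(q - p)) > 0`.
-/

open scoped ComplexConjugate

lemma sqrtIm_sq (z : ℂ) : sqrtIm z ^ 2 = z := by
  unfold sqrtIm
  split_ifs <;> simp

lemma sqrtIm_im_nonneg (z : ℂ) : 0 ≤ (sqrtIm z).im := by
  unfold sqrtIm
  split_ifs with h
  · exact h
  · simpa using (not_le.mp h).le

lemma sqrtIm_eq_of_sq_eq {w z : ℂ} (h : w ^ 2 = z) (hw : 0 < w.im) : sqrtIm z = w := by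
  have hroots : (sqrtIm z - w) * (sqrtIm z + w) = 0 := by
    linear_combination sqrtIm_sq z - h
  rcases mul_eq_zero.mp hroots with h' | h'
  · exact sub_eq_zero.mp h'
  · have := sqrtIm_im_nonneg z
    rw [eq_neg_of_add_eq_zero_left h', neg_im] at this
    linarith

lemma circleIntegral_sub_inv_eq (w : ℂ) :
    (∮ z in C(0, 1), (z - w)⁻¹) = I * ∫ t in (0 : ℝ)..2 * π, exp (t * I) / (exp (t * I) - w) := by
  simp only [circleIntegral, deriv_circleMap, circleMap, ofReal_one, one_mul, zero_add,
    smul_eq_mul, ← intervalIntegral.integral_const_mul]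
  congr 1 with t
  ring

lemma integral_exp_div_exp_sub_of_norm_lt_one {w : ℂ} (hw : ‖w‖ < 1) :
    ∫ t in (0 : ℝ)..2 * π, exp (t * I) / (exp (t * I) - w) = 2 * π := by
  have h := circleIntegral.integral_sub_inv_of_mem_ball (c := 0) (R := 1) (w := w)
    (by simpa using hw)
  rw [circleIntegral_sub_inv_eq] at h
  exact mul_left_cancel₀ I_ne_zero (by rw [h]; ring)

lemma integral_exp_div_exp_sub_of_one_lt_norm {w : ℂ} (hw : 1 < ‖w‖) :
    ∫ t in (0 : ℝ)..2 * π, exp (t * I) / (exp (t * I) - w) = 0 := by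
  have hdiff : DifferentiableOn ℂ (fun z ↦ (z - w)⁻¹) (Metric.closedBall 0 1) := by
    refine (differentiableOn_id.sub_const w).inv fun z hz h0 ↦ ?_
    rw [id, sub_eq_zero] at h0
    rw [h0, Metric.mem_closedBall, dist_zero_right] at hz
    linarith
  have h := (hdiff.diffContOnCl_ball le_rfl).circleIntegral_eq_zero zero_le_one
  rw [circleIntegral_sub_inv_eq] at h
  exact (mul_eq_zero.mp h).resolve_left I_ne_zero

lemma exp_ofReal_mul_I_sub_ne_zero {w : ℂ} (hw : ‖w‖ ≠ 1) (t : ℝ) : exp (t * I) - w ≠ 0 :=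
  fun h ↦ hw (by rw [← sub_eq_zero.mp h, norm_exp_ofReal_mul_I])

lemma continuous_exp_div_exp_sub {w : ℂ} (hw : ‖w‖ ≠ 1) :
    Continuous fun t : ℝ ↦ exp (t * I) / (exp (t * I) - w) :=
  have he : Continuous fun t : ℝ ↦ exp (t * I) := by fun_prop
  he.div (he.sub continuous_const) (exp_ofReal_mul_I_sub_ne_zero hw)

lemma two_mul_cos_mul_exp (t : ℝ) :
    2 * (Real.cos t : ℂ) * exp (t * I) = exp (t * I) ^ 2 + 1 := by
  have h : exp (-t * I) * exp (t * I) = 1 := by rw [← Complex.exp_add]; simp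
  rw [ofReal_cos, Complex.cos]
  linear_combination h

lemma norm_ne_one_of_add_eq_of_mul_eq_one {φ : ℝ} {a r r' : ℂ} (ha : 0 < a.im)
    (hsum : φ * (r + r') = a) (hprod : r * r' = 1) : ‖r‖ ≠ 1 := by
  intro h1
  have hr' : r' = conj r := by
    rw [eq_inv_of_mul_eq_one_right hprod, inv_def, normSq_eq_norm_sq, h1]
    simp
  rw [← hsum, hr', add_conj] at ha
  simp at ha

lemma exists_add_eq_mul_eq_one_norm_lt_one_lt_norm {φ : ℝ} (hφ : φ ≠ 0) {a : ℂ}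
    (ha : 0 < a.im) : ∃ p q : ℂ, φ * (p + q) = a ∧ p * q = 1 ∧ ‖p‖ < 1 ∧ 1 < ‖q‖ := by
  have hφ' : (φ : ℂ) ≠ 0 := ofReal_ne_zero.mpr hφ
  set u := sqrtIm (a ^ 2 - 4 * φ ^ 2)
  have hsum : φ * ((a - u) / (2 * φ) + (a + u) / (2 * φ)) = a := by field_simp; ring
  have hprod : (a - u) / (2 * φ) * ((a + u) / (2 * φ)) = 1 := by
    field_simp
    linear_combination -sqrtIm_sq (a ^ 2 - 4 * φ ^ 2)
  have hnorm := congrArg norm hprod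
  rw [norm_mul, norm_one] at hnorm
  rcases (norm_ne_one_of_add_eq_of_mul_eq_one ha hsum hprod).lt_or_gt with h | h
  · exact ⟨_, _, hsum, hprod, h, by nlinarith [norm_nonneg ((a - u) / (2 * φ))]⟩
  · refine ⟨_, _, by rw [add_comm, hsum], by rw [mul_comm, hprod], ?_, h⟩
    nlinarith [norm_nonneg ((a + u) / (2 * φ))]

lemma inv_sub_two_mul_cos_eq {φ : ℝ} (hφ : φ ≠ 0) {a p q : ℂ} (hsum : φ * (p + q) = a)
    (hprod : p * q = 1) (hp : ‖p‖ ≠ 1) (hq : ‖q‖ ≠ 1) (hpq : p ≠ q) (t : ℝ) :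
    (a - 2 * φ * Real.cos t)⁻¹ =
      (φ * (q - p))⁻¹ * (exp (t * I) / (exp (t * I) - p) - exp (t * I) / (exp (t * I) - q)) := by
  have hφ' : (φ : ℂ) ≠ 0 := ofReal_ne_zero.mpr hφ
  have hp' := exp_ofReal_mul_I_sub_ne_zero hp t
  have hq' := exp_ofReal_mul_I_sub_ne_zero hq t
  set e := exp (t * I)
  have hqp : q - p ≠ 0 := sub_ne_zero.mpr hpq.symm
  have hden : (a - 2 * φ * Real.cos t) * e = -φ * ((e - p) * (e - q)) := by
    linear_combination -(φ : ℂ) * two_mul_cos_mul_exp t - e * hsum + (φ : ℂ) * hprod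
  have hA : a - 2 * φ * Real.cos t ≠ 0 := fun h ↦ by
    rw [h, zero_mul] at hden
    exact mul_ne_zero (neg_ne_zero.mpr hφ') (mul_ne_zero hp' hq') hden.symm
  field_simp
  linear_combination (q - p) * hden

lemma integral_inv_sub_two_mul_cos_of_roots {φ : ℝ} (hφ : φ ≠ 0) {a p q : ℂ}
    (hsum : φ * (p + q) = a) (hprod : p * q = 1) (hp : ‖p‖ < 1) (hq : 1 < ‖q‖) :
    ∫ t in (0 : ℝ)..2 * π, (a - 2 * φ * Real.cos t)⁻¹ = 2 * π / (φ * (q - p)) := by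
  have hpq : p ≠ q := by rintro rfl; linarith
  rw [intervalIntegral.integral_congr fun t _ ↦
      inv_sub_two_mul_cos_eq hφ hsum hprod hp.ne hq.ne' hpq t,
    intervalIntegral.integral_const_mul,
    intervalIntegral.integral_sub ((continuous_exp_div_exp_sub hp.ne).intervalIntegrable _ _)
      ((continuous_exp_div_exp_sub hq.ne').intervalIntegrable _ _),
    integral_exp_div_exp_sub_of_norm_lt_one hp, integral_exp_div_exp_sub_of_one_lt_norm hq]
  ring

lemma exists_sq_eq_integral_inv_sub_two_mul_cos_eq (φ : ℝ) {a : ℂ} (ha : 0 < a.im) :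
    ∃ X : ℂ, X ^ 2 = a ^ 2 - 4 * φ ^ 2 ∧
      ∫ t in (0 : ℝ)..2 * π, (a - 2 * φ * Real.cos t)⁻¹ = 2 * π / X := by
  rcases eq_or_ne φ 0 with rfl | hφ
  · refine ⟨a, by simp, ?_⟩
    simp [div_eq_mul_inv]
  · obtain ⟨p, q, hsum, hprod, hp, hq⟩ := exists_add_eq_mul_eq_one_norm_lt_one_lt_norm hφ ha
    refine ⟨φ * (q - p), ?_, integral_inv_sub_two_mul_cos_of_roots hφ hsum hprod hp hq⟩
    rw [← hsum]
    linear_combination -4 * (φ : ℂ) ^ 2 * hprod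

lemma im_integral_inv_sub_two_mul_cos_neg (φ : ℝ) {a : ℂ} (ha : 0 < a.im) :
    (∫ t in (0 : ℝ)..2 * π, (a - 2 * φ * Real.cos t)⁻¹).im < 0 := by
  have him : ∀ t : ℝ, (a - 2 * φ * Real.cos t).im = a.im := by simp
  have hA : ∀ t : ℝ, a - 2 * φ * Real.cos t ≠ 0 := fun t h ↦
    ha.ne' (by rw [← him t, h, zero_im])
  have hcont : Continuous fun t : ℝ ↦ (a - 2 * φ * Real.cos t)⁻¹ :=
    (by fun_prop : Continuous fun t : ℝ ↦ a - 2 * φ * Real.cos t).inv₀ hA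
  rw [← imCLM_apply, ← imCLM.intervalIntegral_comp_comm (hcont.intervalIntegrable _ _),
    ← neg_pos, ← intervalIntegral.integral_neg]
  refine intervalIntegral.intervalIntegral_pos_of_pos
    ((imCLM.continuous.comp hcont).neg.intervalIntegrable _ _) (fun t ↦ ?_) two_pi_pos
  simp only [imCLM_apply, inv_im, him, neg_div, neg_neg]
  exact div_pos ha (normSq_pos.mpr (hA t))

theorem integral_inv_sub_two_mul_cos (φ : ℝ) {a : ℂ} (ha : 0 < a.im) :
    ∫ t in (0 : ℝ)..2 * π, (a - 2 * φ * Real.cos t)⁻¹ = 2 * π / sqrtIm (a ^ 2 - 4 * φ ^ 2) := by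
  obtain ⟨X, hX, hint⟩ := exists_sq_eq_integral_inv_sub_two_mul_cos_eq φ ha
  suffices hXim : 0 < X.im by rw [sqrtIm_eq_of_sq_eq hX hXim, hint]
  have hneg := im_integral_inv_sub_two_mul_cos_neg φ ha
  rw [hint] at hneg
  by_contra! hX0
  have : 0 ≤ (2 * π / X).im := by
    rw [div_eq_mul_inv, show (2 * π : ℂ) = (2 * π : ℝ) by push_cast; ring, im_ofReal_mul, inv_im]
    exact mul_nonneg two_pi_pos.le (div_nonneg (neg_nonneg.mpr hX0) (normSq_nonneg X))
  linarith

lemma norm_one_sub_mul_exp_sq (φ t : ℝ) :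
    ‖1 - φ * exp (t * I)‖ ^ 2 = 1 + φ ^ 2 - 2 * φ * Real.cos t := by
  rw [Complex.sq_norm, normSq_apply]
  simp only [sub_re, sub_im, one_re, one_im, re_ofReal_mul, im_ofReal_mul,
    exp_ofReal_mul_I_re, exp_ofReal_mul_I_im]
  linear_combination φ ^ 2 * Real.sin_sq_add_cos_sq t

theorem ar1_lsd_equation_general
    (φ c : ℝ) (hc : 0 < c)
    -- the spectral density of the causal AR(1) process
    (f : ℝ → ℝ)
    (hf : ∀ lam : ℝ, f lam = (1 / (2 * π)) /
        (‖1 - (φ : ℂ) * Complex.exp (Complex.I * lam)‖) ^ 2)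
    (s : ℂ) (hs : 0 < s.im) :
    ∀ z : ℂ,
      ((z = -s⁻¹ + ((1 / (2 * π) : ℝ) : ℂ) *
          ∫ lam in (0:ℝ)..(2 * π), ((c : ℂ) * s + ((2 * π * f lam : ℝ) : ℂ)⁻¹)⁻¹)
        ↔
        (z = -s⁻¹ + (sqrtIm (((c : ℂ) * s + 1 + (φ : ℂ) ^ 2) ^ 2 - 4 * (φ : ℂ) ^ 2))⁻¹)) ∧
      -- in particular, for φ = 0 the equation characterises the standard
      -- Marčenko-Pastur law of index c
      (φ = 0 →
        ((z = -s⁻¹ + ((1 / (2 * π) : ℝ) : ℂ) *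
            ∫ lam in (0:ℝ)..(2 * π), ((c : ℂ) * s + ((2 * π * f lam : ℝ) : ℂ)⁻¹)⁻¹)
          ↔
          (z = -s⁻¹ + ((c : ℂ) * s + 1)⁻¹))) := by
  intro z
  have hcs : 0 < ((c : ℂ) * s + 1).im := by simpa using mul_pos hc hs
  have ha : 0 < ((c : ℂ) * s + 1 + (φ : ℂ) ^ 2).im := by
    rwa [← ofReal_pow, add_im, ofReal_im, add_zero]
  have hintegrand (lam : ℝ) : ((c : ℂ) * s + ((2 * π * f lam : ℝ) : ℂ)⁻¹)⁻¹ =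
      ((c : ℂ) * s + 1 + (φ : ℂ) ^ 2 - 2 * φ * Real.cos lam)⁻¹ := by
    have hdensity : 2 * π * f lam = (1 + φ ^ 2 - 2 * φ * Real.cos lam)⁻¹ := by
      rw [hf, mul_comm I, norm_one_sub_mul_exp_sq]
      field_simp
    rw [hdensity]
    push_cast
    rw [inv_inv]
    ring
  have hmean : ((1 / (2 * π) : ℝ) : ℂ) *
      ∫ lam in (0:ℝ)..(2 * π), ((c : ℂ) * s + ((2 * π * f lam : ℝ) : ℂ)⁻¹)⁻¹ =
      (sqrtIm (((c : ℂ) * s + 1 + (φ : ℂ) ^ 2) ^ 2 - 4 * (φ : ℂ) ^ 2))⁻¹ := by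
    rw [intervalIntegral.integral_congr fun lam _ ↦ hintegrand lam,
      integral_inv_sub_two_mul_cos φ ha]
    push_cast
    field_simp
  refine ⟨by rw [hmean], ?_⟩
  rintro rfl
  rw [hmean, sqrtIm_eq_of_sq_eq (by push_cast; ring) hcs]

/-- The characterising equation of the LSD for an AR(1) process reduces to
the explicit equation (10); for φ = 0 it is that of the Marčenko-Pastur law. -/
theorem ar1_lsd_equation
    (φ c : ℝ) (hφ : |φ| < 1) (hc : 0 < c)
    -- the spectral density of the causal AR(1) process
    (f : ℝ → ℝ)
    (hf : ∀ lam : ℝ, f lam = (1 / (2 * π)) /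
        (‖1 - (φ : ℂ) * Complex.exp (Complex.I * lam)‖) ^ 2)
    (s : ℂ) (hs : 0 < s.im) :
    ∀ z : ℂ,
      ((z = -s⁻¹ + ((1 / (2 * π) : ℝ) : ℂ) *
          ∫ lam in (0:ℝ)..(2 * π), ((c : ℂ) * s + ((2 * π * f lam : ℝ) : ℂ)⁻¹)⁻¹)
        ↔
        (z = -s⁻¹ + (sqrtIm (((c : ℂ) * s + 1 + (φ : ℂ) ^ 2) ^ 2 - 4 * (φ : ℂ) ^ 2))⁻¹)) ∧
      -- in particular, for φ = 0 the equation characterises the standard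
      -- Marčenko-Pastur law of index c
      (φ = 0 →
        ((z = -s⁻¹ + ((1 / (2 * π) : ℝ) : ℂ) *
            ∫ lam in (0:ℝ)..(2 * π), ((c : ℂ) * s + ((2 * π * f lam : ℝ) : ℂ)⁻¹)⁻¹)
          ↔
          (z = -s⁻¹ + ((c : ℂ) * s + 1)⁻¹))) :=
  ar1_lsd_equation_general φ c hc f hf s hs
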